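/- arXiv:0704.1702 — 2 statements merged into one kernel-verified Lean document; each statement's English description precedes it below -/
import Mathlib

section
/- Let K be a positive rational number and let B consist of exactly two baskets (b₁, r₁), (b₂, r₂) with r₁ ≤ r₂, such that P_2(K, B) = 1 and P_3(K, B) = 2. Then b'₁ = 1, b'₂ = 2, 1 + K = 1/r₁ + 4/r₂, and (r₁, r₂) is one of (2, 5), (2, 7), (3, 5), (4, 5). -/
/-- A basket `(b, r)` with `0 < b < r` and `gcd(b, r) = 1`. -/
structure Basket where
  b : ℕ
  r : ℕ
  b_pos : 0 < b
  b_lt_r : b < r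
  coprime : Nat.gcd b r = 1

/-- Reid's correction term `l_Q(m)` of a basket `Q` for `m ≥ 2`. -/
def Basket.corr (Q : Basket) (m : ℕ) : ℚ :=
  ∑ j ∈ Finset.Icc 1 (m - 1),
    ((Q.b * j % Q.r : ℕ) : ℚ) * ((Q.r : ℚ) - ((Q.b * j % Q.r : ℕ) : ℚ)) / (2 * (Q.r : ℚ))

/-- The virtual `m`-th plurigenus `P_m(K, B)` for `m ≥ 2`. -/
def plurigenus (K : ℚ) (B : Multiset Basket) (m : ℕ) : ℚ :=
  (1 / 12 : ℚ) * m * (m - 1) * (2 * m - 1) * K + (B.map (fun Q => Q.corr m)).sum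

/-- `b' = b` if `2b ≤ r`, and `b' = r - b` otherwise. -/
def Basket.b' (Q : Basket) : ℕ := if 2 * Q.b ≤ Q.r then Q.b else Q.r - Q.b

/-- The basket `(1, 2)`. -/
def B12 : Basket := ⟨1, 2, by decide, by decide, by decide⟩

/-!
For `m = 2, 3` the correction term depends only on `b'`: `l_Q(2) = b'(r - b')/(2r)` and
`l_Q(3) = l_Q(2) + 2b'(r - 2b')/(2r)`, hence `5 l_Q(2) - l_Q(3) = b'`. Since the `K`-coefficients
of `P₂` and `P₃` are `1/2` and `5/2`, `5 P₂ - P₃ = b'₁ + b'₂ = 3`, and then `P₂ = 1` reads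
`1 + K = b'₁²/r₁ + b'₂²/r₂`. A basket with `b' = 2` has `r` odd and `r ≥ 5`, so `(b'₁, b'₂) = (2, 1)`
would give `1 + K ≤ 4/5 + 1/5`. Thus `(b'₁, b'₂) = (1, 2)`, and `K > 0` becomes
`r₁ r₂ < r₂ + 4 r₁`, which leaves the four listed pairs.
-/
namespace Basket

variable (Q : Basket)

lemma two_le_r : 2 ≤ Q.r := by
  have := Q.b_pos; have := Q.b_lt_r; omega

lemma one_le_b' : 1 ≤ Q.b' := by
  have := Q.b_pos; have := Q.b_lt_r
  unfold b'; split <;> omega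

lemma two_mul_b'_le_r : 2 * Q.b' ≤ Q.r := by
  have := Q.b_lt_r
  unfold b'; split <;> omega

lemma odd_r_of_b'_eq_two (h : Q.b' = 2) : Odd Q.r := by
  rw [Nat.odd_iff]
  by_contra hr
  have hb : 2 ∣ Q.b := by
    have := Q.b_lt_r
    unfold b' at h; split at h <;> omega
  have := Nat.dvd_gcd hb (Nat.dvd_of_mod_eq_zero (by omega : Q.r % 2 = 0))
  rw [Q.coprime] at this
  omega

lemma five_le_r_of_b'_eq_two (h : Q.b' = 2) : 5 ≤ Q.r := by
  have := Q.two_mul_b'_le_r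
  have := Q.odd_r_of_b'_eq_two h
  rw [Nat.odd_iff] at this
  omega

-- The summands `x (r - x)` of `corr` are invariant under `x ↦ r - x`, so only `b'` matters.
lemma b_mul_sub_b : (Q.b : ℚ) * (Q.r - Q.b) = Q.b' * (Q.r - Q.b') := by
  have := Q.b_lt_r
  unfold b'; split
  · rfl
  · rw [Nat.cast_sub this.le]; ring

lemma two_b_mod_mul_sub :
    ((2 * Q.b % Q.r : ℕ) : ℚ) * (Q.r - (2 * Q.b % Q.r : ℕ)) =
      2 * Q.b' * (Q.r - 2 * Q.b') := by
  have := Q.b_lt_r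
  unfold b'
  rcases lt_trichotomy (2 * Q.b) Q.r with h | h | h
  · rw [if_pos h.le, Nat.mod_eq_of_lt h]; push_cast; ring
  · rw [if_pos h.le, h, Nat.mod_self, ← h]; push_cast; ring
  · rw [if_neg (by omega), Nat.mod_eq_sub_mod h.le, Nat.mod_eq_of_lt (by omega),
      Nat.cast_sub h.le, Nat.cast_sub this.le]
    push_cast; ring

lemma corr_two : Q.corr 2 = Q.b' * (Q.r - Q.b') / (2 * Q.r) := by
  rw [corr, show Finset.Icc 1 (2 - 1) = {1} from rfl, Finset.sum_singleton, Nat.mul_one,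
    Nat.mod_eq_of_lt Q.b_lt_r, b_mul_sub_b]

lemma corr_three :
    Q.corr 3 = Q.corr 2 + 2 * Q.b' * (Q.r - 2 * Q.b') / (2 * Q.r) := by
  rw [corr, show Finset.Icc 1 (3 - 1) = {1, 2} from rfl, Finset.sum_pair (by decide),
    corr_two, Nat.mul_one, Nat.mod_eq_of_lt Q.b_lt_r, b_mul_sub_b, mul_comm Q.b 2,
    two_b_mod_mul_sub]

lemma five_mul_corr_two_sub_corr_three : 5 * Q.corr 2 - Q.corr 3 = Q.b' := by
  have : (Q.r : ℚ) ≠ 0 := by have := Q.two_le_r; positivity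
  rw [corr_three, corr_two]
  field_simp
  ring

end Basket

lemma plurigenus_pair (K : ℚ) (Q₁ Q₂ : Basket) (m : ℕ) :
    plurigenus K {Q₁, Q₂} m = m * (m - 1) * (2 * m - 1) / 12 * K + Q₁.corr m + Q₂.corr m := by
  simp only [plurigenus, Multiset.insert_eq_cons, Multiset.map_cons, Multiset.map_singleton,
    Multiset.sum_cons, Multiset.sum_singleton]
  ring

lemma five_mul_plurigenus_two_sub_plurigenus_three (K : ℚ) (Q₁ Q₂ : Basket) :
    5 * plurigenus K {Q₁, Q₂} 2 - plurigenus K {Q₁, Q₂} 3 = Q₁.b' + Q₂.b' := by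
  rw [plurigenus_pair, plurigenus_pair, ← Q₁.five_mul_corr_two_sub_corr_three,
    ← Q₂.five_mul_corr_two_sub_corr_three]
  push_cast
  ring

lemma one_add_eq_of_plurigenus_two_eq_one (K : ℚ) (Q₁ Q₂ : Basket)
    (h2 : plurigenus K {Q₁, Q₂} 2 = 1) (hsum : Q₁.b' + Q₂.b' = 3) :
    1 + K = (Q₁.b' : ℚ) ^ 2 / Q₁.r + (Q₂.b' : ℚ) ^ 2 / Q₂.r := by
  have : (Q₁.r : ℚ) ≠ 0 := by have := Q₁.two_le_r; positivity
  have : (Q₂.r : ℚ) ≠ 0 := by have := Q₂.two_le_r; positivity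
  have hsum : (Q₁.b' : ℚ) + Q₂.b' = 3 := by exact_mod_cast hsum
  rw [plurigenus_pair, Q₁.corr_two, Q₂.corr_two] at h2
  field_simp at h2 ⊢
  push_cast at h2
  linear_combination h2 / 12 - (Q₁.r : ℚ) * Q₂.r * hsum

lemma r_pair_cases {r₁ r₂ : ℕ} (h₁ : 2 ≤ r₁) (h12 : r₁ ≤ r₂) (h₂ : 5 ≤ r₂) (hodd : Odd r₂)
    (hlt : (1 : ℚ) < 1 / r₁ + 4 / r₂) :
    (r₁ = 2 ∧ r₂ = 5) ∨ (r₁ = 2 ∧ r₂ = 7) ∨ (r₁ = 3 ∧ r₂ = 5) ∨ (r₁ = 4 ∧ r₂ = 5) := by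
  have hr₁ : (2 : ℚ) ≤ r₁ := by exact_mod_cast h₁
  have hr₂ : (5 : ℚ) ≤ r₂ := by exact_mod_cast h₂
  rw [div_add_div _ _ (by positivity) (by positivity), lt_div_iff₀ (by positivity)] at hlt
  have hlt : ((r₁ * r₂ : ℕ) : ℚ) < ((r₂ + 4 * r₁ : ℕ) : ℚ) := by push_cast; linarith
  have hlt : r₁ * r₂ < r₂ + 4 * r₁ := by exact_mod_cast hlt
  rw [Nat.odd_iff] at hodd
  have : r₁ < 5 := by nlinarith
  interval_cases r₁ <;> omega

theorem stmt12 (K : ℚ) (hK : 0 < K) (Q₁ Q₂ : Basket)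
    (h12 : Q₁.r ≤ Q₂.r)
    (h2 : plurigenus K {Q₁, Q₂} 2 = 1)
    (h3 : plurigenus K {Q₁, Q₂} 3 = 2) :
    Q₁.b' = 1 ∧ Q₂.b' = 2 ∧
    1 + K = 1 / (Q₁.r : ℚ) + 4 / (Q₂.r : ℚ) ∧
    ((Q₁.r = 2 ∧ Q₂.r = 5) ∨ (Q₁.r = 2 ∧ Q₂.r = 7) ∨
     (Q₁.r = 3 ∧ Q₂.r = 5) ∨ (Q₁.r = 4 ∧ Q₂.r = 5)) := by
  have hsum : Q₁.b' + Q₂.b' = 3 := by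
    have : ((Q₁.b' + Q₂.b' : ℕ) : ℚ) = 3 := by
      push_cast; linarith [five_mul_plurigenus_two_sub_plurigenus_three K Q₁ Q₂]
    exact_mod_cast this
  have hK1 := one_add_eq_of_plurigenus_two_eq_one K Q₁ Q₂ h2 hsum
  obtain ⟨e₁, e₂⟩ : Q₁.b' = 1 ∧ Q₂.b' = 2 := by
    have := Q₁.one_le_b'; have := Q₂.one_le_b'
    refine (by omega : (Q₁.b' = 1 ∧ Q₂.b' = 2) ∨ (Q₁.b' = 2 ∧ Q₂.b' = 1)).resolve_right ?_
    rintro ⟨e₁, e₂⟩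
    have h₁ : 5 ≤ Q₁.r := Q₁.five_le_r_of_b'_eq_two e₁
    have h₂ : (5 : ℚ) ≤ Q₂.r := by exact_mod_cast h₁.trans h12
    have h₁ : (5 : ℚ) ≤ Q₁.r := by exact_mod_cast h₁
    rw [e₁, e₂] at hK1
    have : (4 : ℚ) / Q₁.r ≤ 4 / 5 := div_le_div_of_nonneg_left (by norm_num) (by norm_num) h₁
    have : (1 : ℚ) / Q₂.r ≤ 1 / 5 := div_le_div_of_nonneg_left (by norm_num) (by norm_num) h₂
    push_cast at hK1
    linarith
  have hK1 : 1 + K = 1 / (Q₁.r : ℚ) + 4 / (Q₂.r : ℚ) := by rw [hK1, e₁, e₂]; norm_num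
  exact ⟨e₁, e₂, hK1, r_pair_cases Q₁.two_le_r h12 (Q₂.five_le_r_of_b'_eq_two e₂)
    (Q₂.odd_r_of_b'_eq_two e₂) (by linarith)⟩
end

section
/- Let K be a positive rational number and B a finite multiset of baskets such that P_2(K, B) = 1, P_3(K, B) = 2, P_4(K, B) = 3 and P_5(K, B) = 4. Then K ≥ 1/30, and K = 1/30 if and only if the multiset of pairs (r_Q, b'_Q) for Q ∈ B equals {(2,1), (3,1), (5,1)}, where for Q = (b, r) we write r_Q = r and b'_Q = b'. -/
def reidTerm (b r j : ℕ) : ℚ :=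
  ((b * j % r : ℕ) : ℚ) * ((r : ℚ) - ((b * j % r : ℕ) : ℚ)) / (2 * (r : ℚ))

lemma reidTerm_sub_left {b r : ℕ} (hbr : b < r) (j : ℕ) :
    reidTerm (r - b) r j = reidTerm b r j := by
  unfold reidTerm
  set x := b * j % r
  set y := (r - b) * j % r
  have hx : x < r := Nat.mod_lt _ (by omega)
  have hy : y < r := Nat.mod_lt _ (by omega)
  have hdvd : r ∣ x + y := by
    rw [Nat.dvd_iff_mod_eq_zero, ← Nat.add_mod, ← Nat.add_mul, Nat.add_sub_cancel' hbr.le,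
      Nat.mul_mod_right]
  obtain h | h : x + y = 0 ∨ x + y = r := by
    rcases Nat.eq_zero_or_pos (x + y) with h | h
    · exact .inl h
    · exact .inr (Nat.eq_of_dvd_of_lt_two_mul h.ne' hdvd (by omega))
  · simp [show x = 0 by omega, show y = 0 by omega]
  · rw [show (y : ℚ) = r - x by rw [← h]; push_cast; ring]
    ring

lemma reidTerm_one {p r : ℕ} (hpr : p < r) : reidTerm p r 1 = p * (r - p) / (2 * r) := by
  rw [reidTerm, mul_one, Nat.mod_eq_of_lt hpr]

lemma sq_mul_reidTerm_one_sub_reidTerm {p r m q : ℕ} (hpr : p < r) (hq : p * m / r = q) :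
    (m : ℚ) ^ 2 * reidTerm p r 1 - reidTerm p r m =
      (p * m * (m - 1 - 2 * q) + q * (q + 1) * r) / 2 := by
  have hr : (r : ℚ) ≠ 0 := Nat.cast_ne_zero.2 (by omega)
  have hmod : ((p * m % r : ℕ) : ℚ) = p * m - r * q := by
    rw [eq_sub_iff_add_eq, add_comm, ← hq]; exact_mod_cast Nat.div_add_mod (p * m) r
  rw [reidTerm_one hpr, reidTerm, hmod]
  field_simp
  ring

section
variable {p r : ℕ} (hp : 0 < p) (hpr : 2 * p ≤ r)
include hp hpr

lemma sq_mul_reidTerm_one_sub_reidTerm_two :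
    (2 : ℚ) ^ 2 * reidTerm p r 1 - reidTerm p r 2 = p := by
  rcases hpr.lt_or_eq with h | h
  · have := sq_mul_reidTerm_one_sub_reidTerm (p := p) (r := r) (m := 2) (q := 0) (by omega)
      (Nat.div_eq_of_lt (by omega))
    push_cast at this; linarith
  · subst h
    have := sq_mul_reidTerm_one_sub_reidTerm (p := p) (r := 2 * p) (m := 2) (q := 1) (by omega)
      (Nat.div_eq_of_lt_le (by omega) (by omega))
    push_cast at this; linarith

lemma sq_mul_reidTerm_one_sub_reidTerm_three :
    (3 : ℚ) ^ 2 * reidTerm p r 1 - reidTerm p r 3 = (min (3 * p) r : ℕ) := by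
  rcases lt_or_ge (3 * p) r with h | h
  · have := sq_mul_reidTerm_one_sub_reidTerm (p := p) (r := r) (m := 3) (q := 0) (by omega)
      (Nat.div_eq_of_lt (by omega))
    rw [min_eq_left h.le]; push_cast at this ⊢; linarith
  · have := sq_mul_reidTerm_one_sub_reidTerm (p := p) (r := r) (m := 3) (q := 1) (by omega)
      (Nat.div_eq_of_lt_le (by omega) (by omega))
    rw [min_eq_right h]; push_cast at this; linarith

lemma sq_mul_reidTerm_one_sub_reidTerm_four :
    (4 : ℚ) ^ 2 * reidTerm p r 1 - reidTerm p r 4 = (min (6 * p) (2 * p + r) : ℕ) := by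
  rcases lt_or_ge (4 * p) r with h | h
  · have := sq_mul_reidTerm_one_sub_reidTerm (p := p) (r := r) (m := 4) (q := 0) (by omega)
      (Nat.div_eq_of_lt (by omega))
    rw [min_eq_left (by omega)]; push_cast at this ⊢; linarith
  rw [min_eq_right (by omega)]
  rcases hpr.lt_or_eq with h' | h'
  · have := sq_mul_reidTerm_one_sub_reidTerm (p := p) (r := r) (m := 4) (q := 1) (by omega)
      (Nat.div_eq_of_lt_le (by omega) (by omega))
    push_cast at this ⊢; linarith
  · subst h'
    have := sq_mul_reidTerm_one_sub_reidTerm (p := p) (r := 2 * p) (m := 4) (q := 2) (by omega)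
      (Nat.div_eq_of_lt_le (by omega) (by omega))
    push_cast at this ⊢; linarith

end

namespace Basket

lemma b'_pos (Q : Basket) : 0 < Q.b' := by
  have := Q.b_pos
  have := Q.b_lt_r
  unfold b'; split <;> omega

lemma two_mul_b'_le (Q : Basket) : 2 * Q.b' ≤ Q.r := by
  have := Q.b_lt_r
  unfold b'; split <;> omega

lemma reidTerm_b' (Q : Basket) (j : ℕ) : reidTerm Q.b' Q.r j = reidTerm Q.b Q.r j := by
  unfold b'; split
  · rfl
  · exact reidTerm_sub_left Q.b_lt_r j

lemma corr_succ (Q : Basket) (m : ℕ) : Q.corr (m + 1) = Q.corr m + reidTerm Q.b Q.r m := by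
  cases m with
  | zero => simp [corr, reidTerm]
  | succ m => exact Finset.sum_Icc_succ_top (by omega) _

lemma pos_and_two_mul_le_of_mem_map (B : Multiset Basket) :
    ∀ x ∈ B.map (fun Q => (Q.r, Q.b')), 0 < x.2 ∧ 2 * x.2 ≤ x.1 := by
  simpa using fun Q _ => ⟨Q.b'_pos, Q.two_mul_b'_le⟩

end Basket

lemma plurigenus_one (K : ℚ) (B : Multiset Basket) : plurigenus K B 1 = 0 := by
  simp [plurigenus, Basket.corr]

lemma plurigenus_succ_sub (K : ℚ) (B : Multiset Basket) (m : ℕ) :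
    plurigenus K B (m + 1) - plurigenus K B m =
      m ^ 2 / 2 * K + (B.map fun Q => reidTerm Q.b' Q.r m).sum := by
  simp only [plurigenus, Basket.corr_succ, Multiset.sum_map_add, Basket.reidTerm_b']
  push_cast
  ring

section Types

variable {M : Multiset (ℕ × ℕ)}

lemma sum_map_eq_mul_sum_reidTerm_sub (hM : ∀ x ∈ M, 0 < x.2 ∧ 2 * x.2 ≤ x.1) {c : ℚ} {m : ℕ}
    {f : ℕ → ℕ → ℕ}
    (hf : ∀ {p r : ℕ}, 0 < p → 2 * p ≤ r → c * reidTerm p r 1 - reidTerm p r m = f p r) :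
    (((M.map fun x => f x.2 x.1).sum : ℕ) : ℚ) =
      c * (M.map fun x => reidTerm x.2 x.1 1).sum - (M.map fun x => reidTerm x.2 x.1 m).sum := by
  rw [Nat.cast_multiset_sum, Multiset.map_map, ← Multiset.sum_map_mul_left,
    ← Multiset.sum_map_sub]
  exact congrArg _ (Multiset.map_congr rfl fun x hx => (hf (hM x hx).1 (hM x hx).2).symm)

lemma sum_map_sq_div_eq (hM : ∀ x ∈ M, 0 < x.2 ∧ 2 * x.2 ≤ x.1) :
    (M.map fun x => (x.2 : ℚ) ^ 2 / x.1).sum =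
      (((M.map fun x => x.2).sum : ℕ) : ℚ) - 2 * (M.map fun x => reidTerm x.2 x.1 1).sum := by
  rw [Nat.cast_multiset_sum, Multiset.map_map, ← Multiset.sum_map_mul_left,
    ← Multiset.sum_map_sub]
  refine congrArg _ (Multiset.map_congr rfl fun x hx => ?_)
  have := hM x hx
  dsimp only [Function.comp_apply]
  have hr : (x.1 : ℚ) ≠ 0 := Nat.cast_ne_zero.2 (by omega)
  rw [reidTerm_one (by omega)]
  field_simp
  ring

lemma types_of_sums (hM : ∀ x ∈ M, 0 < x.2 ∧ 2 * x.2 ≤ x.1)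
    (h1 : (M.map fun x => x.2).sum = 3) (h3 : (M.map fun x => min (3 * x.2) x.1).sum = 8)
    (h4 : (M.map fun x => min (6 * x.2) (2 * x.2 + x.1)).sum = 15) :
    M = {(2, 1), (7, 2)} ∨ ∃ r ≥ 4, M = {(r, 1), (5, 2)} ∨ M = {(2, 1), (3, 1), (r, 1)} := by
  have hcard : Multiset.card M ≤ 3 := by
    simpa [h1] using Multiset.card_nsmul_le_sum (s := M.map fun x => x.2) (a := 1)
      (by simpa [Nat.one_le_iff_ne_zero] using fun p r h => (hM (r, p) h).1.ne')
  obtain hc | hc | hc | hc : Multiset.card M = 0 ∨ Multiset.card M = 1 ∨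
      Multiset.card M = 2 ∨ Multiset.card M = 3 := by omega
  · simp_all
  · obtain ⟨⟨r, p⟩, rfl⟩ := Multiset.card_eq_one.1 hc
    clear hcard hc
    simp only [Multiset.mem_singleton, forall_eq, Multiset.map_singleton,
      Multiset.sum_singleton] at hM h1 h3 h4
    omega
  · obtain ⟨⟨r₁, p₁⟩, ⟨r₂, p₂⟩, rfl⟩ := Multiset.card_eq_two.1 hc
    clear hcard hc
    simp only [Multiset.insert_eq_cons, Multiset.mem_cons, Multiset.mem_singleton, forall_eq_or_imp,
      forall_eq, Multiset.map_cons, Multiset.map_singleton, Multiset.sum_cons,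
      Multiset.sum_singleton] at hM h1 h3 h4
    rcases (by omega : (p₁ = 1 ∧ r₁ = 2 ∧ p₂ = 2 ∧ r₂ = 7) ∨ (p₂ = 1 ∧ r₂ = 2 ∧ p₁ = 2 ∧ r₁ = 7) ∨
        (p₁ = 1 ∧ 4 ≤ r₁ ∧ p₂ = 2 ∧ r₂ = 5) ∨ (p₂ = 1 ∧ 4 ≤ r₂ ∧ p₁ = 2 ∧ r₁ = 5)) with
      ⟨rfl, rfl, rfl, rfl⟩ | ⟨rfl, rfl, rfl, rfl⟩ | ⟨rfl, h, rfl, rfl⟩ | ⟨rfl, h, rfl, rfl⟩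
    · exact .inl rfl
    · exact .inl (Multiset.pair_comm _ _)
    · exact .inr ⟨r₁, h, .inl rfl⟩
    · exact .inr ⟨r₂, h, .inl (Multiset.pair_comm _ _)⟩
  · obtain ⟨⟨r₁, p₁⟩, ⟨r₂, p₂⟩, ⟨r₃, p₃⟩, rfl⟩ := Multiset.card_eq_three.1 hc
    clear hcard hc
    simp only [Multiset.insert_eq_cons, Multiset.mem_cons, Multiset.mem_singleton, forall_eq_or_imp,
      forall_eq, Multiset.map_cons, Multiset.map_singleton, Multiset.sum_cons,
      Multiset.sum_singleton] at hM h1 h3 h4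
    obtain ⟨rfl, rfl, rfl⟩ : p₁ = 1 ∧ p₂ = 1 ∧ p₃ = 1 := by omega
    right
    rcases (by omega : (r₁ = 2 ∧ r₂ = 3 ∧ 4 ≤ r₃) ∨ (r₁ = 2 ∧ r₃ = 3 ∧ 4 ≤ r₂) ∨
        (r₂ = 2 ∧ r₁ = 3 ∧ 4 ≤ r₃) ∨ (r₂ = 2 ∧ r₃ = 3 ∧ 4 ≤ r₁) ∨
        (r₃ = 2 ∧ r₁ = 3 ∧ 4 ≤ r₂) ∨ (r₃ = 2 ∧ r₂ = 3 ∧ 4 ≤ r₁)) with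
      ⟨rfl, rfl, h⟩ | ⟨rfl, rfl, h⟩ | ⟨rfl, rfl, h⟩ | ⟨rfl, rfl, h⟩ | ⟨rfl, rfl, h⟩ |
      ⟨rfl, rfl, h⟩ <;>
    exact ⟨_, h, .inr (by simp only [Multiset.insert_eq_cons, ← Multiset.cons_zero,
      Multiset.cons_swap])⟩

lemma lt_or_eq_of_types {K : ℚ} (hK : 0 < K)
    (hKM : K = (M.map fun x => (x.2 : ℚ) ^ 2 / x.1).sum - 1)
    (hM : M = {(2, 1), (7, 2)} ∨ ∃ r ≥ 4, M = {(r, 1), (5, 2)} ∨ M = {(2, 1), (3, 1), (r, 1)}) :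
    (1 / 30 < K ∧ M ≠ {(2, 1), (3, 1), (5, 1)}) ∨ (K = 1 / 30 ∧ M = {(2, 1), (3, 1), (5, 1)}) := by
  rcases hM with rfl | ⟨r, hr, rfl | rfl⟩
  · norm_num at hKM
    exact .inl ⟨by rw [hKM]; norm_num, by decide⟩
  · norm_num at hKM
    have : r < 5 := by
      by_contra! h
      have : (r : ℚ)⁻¹ ≤ 5⁻¹ := inv_anti₀ (by norm_num) (by exact_mod_cast h)
      linarith
    obtain rfl : r = 4 := by omega
    exact .inl ⟨by rw [hKM]; norm_num, by decide⟩
  · norm_num at hKM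
    have : r < 6 := by
      by_contra! h
      have : (r : ℚ)⁻¹ ≤ 6⁻¹ := inv_anti₀ (by norm_num) (by exact_mod_cast h)
      linarith
    obtain rfl | rfl : r = 4 ∨ r = 5 := by omega
    · exact .inl ⟨by rw [hKM]; norm_num, by decide⟩
    · exact .inr ⟨by rw [hKM]; norm_num, rfl⟩

end Types

lemma sums_of_plurigenus {K : ℚ} {B : Multiset Basket} {M : Multiset (ℕ × ℕ)}
    (hMB : B.map (fun Q => (Q.r, Q.b')) = M)
    (h2 : plurigenus K B 2 = 1) (h3 : plurigenus K B 3 = 2)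
    (h4 : plurigenus K B 4 = 3) (h5 : plurigenus K B 5 = 4) :
    (M.map fun x => x.2).sum = 3 ∧ (M.map fun x => min (3 * x.2) x.1).sum = 8 ∧
      (M.map fun x => min (6 * x.2) (2 * x.2 + x.1)).sum = 15 ∧
      K = (M.map fun x => (x.2 : ℚ) ^ 2 / x.1).sum - 1 := by
  have hM := hMB ▸ Basket.pos_and_two_mul_le_of_mem_map B
  have hT (m : ℕ) : (M.map fun x => reidTerm x.2 x.1 m).sum =
      plurigenus K B (m + 1) - plurigenus K B m - m ^ 2 / 2 * K := by
    rw [plurigenus_succ_sub, ← hMB, Multiset.map_map, Function.comp_def]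
    ring
  have hT1 := hT 1
  have hT2 := hT 2
  have hT3 := hT 3
  have hT4 := hT 4
  norm_num [plurigenus_one, h2, h3, h4, h5] at hT1 hT2 hT3 hT4
  have e2 := sum_map_eq_mul_sum_reidTerm_sub hM sq_mul_reidTerm_one_sub_reidTerm_two
  have e3 := sum_map_eq_mul_sum_reidTerm_sub hM sq_mul_reidTerm_one_sub_reidTerm_three
  have e4 := sum_map_eq_mul_sum_reidTerm_sub hM sq_mul_reidTerm_one_sub_reidTerm_four
  have eK := sum_map_sq_div_eq hM
  rw [hT1, hT2] at e2
  rw [hT1, hT3] at e3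
  rw [hT1, hT4] at e4
  refine ⟨?_, ?_, ?_, ?_⟩
  · exact_mod_cast e2.trans (by ring : _ = (3 : ℚ))
  · exact_mod_cast e3.trans (by ring : _ = (8 : ℚ))
  · exact_mod_cast e4.trans (by ring : _ = (15 : ℚ))
  · rw [eK, e2, hT1]
    ring

theorem stmt19 (K : ℚ) (hK : 0 < K) (B : Multiset Basket)
    (h2 : plurigenus K B 2 = 1) (h3 : plurigenus K B 3 = 2)
    (h4 : plurigenus K B 4 = 3) (h5 : plurigenus K B 5 = 4) :
    1 / 30 ≤ K ∧
    (K = 1 / 30 ↔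
      B.map (fun Q => (Q.r, Q.b')) = ({(2, 1), (3, 1), (5, 1)} : Multiset (ℕ × ℕ))) := by
  obtain ⟨e2, e3, e4, eK⟩ := sums_of_plurigenus rfl h2 h3 h4 h5
  have hM := Basket.pos_and_two_mul_le_of_mem_map B
  rcases lt_or_eq_of_types hK eK (types_of_sums hM e2 e3 e4) with ⟨hlt, hne⟩ | ⟨rfl, heq⟩
  · exact ⟨hlt.le, iff_of_false hlt.ne' hne⟩
  · exact ⟨le_rfl, iff_of_true rfl heq⟩
end
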